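/- Under the stated setting and Invariants 1 and 2, every classifier h ∈ H with err(h, Ŝ) − err(ĥ, Ŝ) ≤ 3ε/4 satisfies err_D(h) − err_D(h*) ≤ ε; consequently, writing U for the marginal of D on X and ν = err_D(h*), such an h satisfies U({x : h(x) ≠ h*(x)}) ≤ 2ν + ε. -/

import Mathlib

/-!
Compare `h` with `h*` on both samples. Favorable bias transfers the empirical excess
`err(h, Ŝ) - err(h*, Ŝ) ≤ 3ε/4` (recall `err(ĥ, Ŝ) ≤ err(h*, Ŝ)`) to `S` up to `ε/16`, and
concentration transfers it to the true excess up to `σ + √(σ ρ)` with `ρ = ρ_S(h, h*)`. The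
disagreement `ρ` is at most `err(h, Ŝ) + err(h*, Ŝ)`, which the same two invariants bound by
`2 err(ĥ, Ŝ) + O(ε) + √(σ ρ)`; solving this quadratic inequality in `√(σ ρ)` gives
`√(σ ρ) ≤ σ + ε/16`, so the true excess is at most `13ε/16 + 2σ + ε/16 ≤ ε`. The second claim
is the triangle inequality `U(h ≠ h*) ≤ err_D(h) + err_D(h*)`.
-/

open MeasureTheory

/-- Empirical error of a classifier (labels encoded as `Bool`, standing for `{-1,+1}`)
on a finite labeled dataset: the fraction of examples it misclassifies. -/
noncomputable def empErr {X : Type*} (h : X → Bool) (S : List (X × Bool)) : ℝ :=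
  (S.countP (fun p => h p.1 != p.2) : ℝ) / S.length

/-- Empirical disagreement of two classifiers on a finite list of points. -/
noncomputable def empDis {X : Type*} (h h' : X → Bool) (xs : List X) : ℝ :=
  (xs.countP (fun x => h x != h' x) : ℝ) / xs.length

/-- True error of a classifier under a labeled data distribution `D`. -/
noncomputable def trueErr {X : Type*} [MeasurableSpace X]
    (D : Measure (X × Bool)) (h : X → Bool) : ℝ :=
  (D {p | h p.1 ≠ p.2}).toReal

lemma List.countP_le_countP_add_countP {α : Type*} {p q r : α → Bool}
    (hpqr : ∀ a, p a → q a ∨ r a) (l : List α) :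
    l.countP p ≤ l.countP q + l.countP r := by
  induction l with
  | nil => simp
  | cons a l ih =>
    simp only [List.countP_cons]
    have := hpqr a
    split_ifs <;> simp_all <;> omega

lemma empDis_map_fst_le_empErr_add_empErr {X : Type*} (h h' : X → Bool)
    (S : List (X × Bool)) :
    empDis h h' (S.map Prod.fst) ≤ empErr h S + empErr h' S := by
  unfold empDis empErr
  rw [List.length_map, List.countP_map, ← add_div]
  gcongr
  exact_mod_cast List.countP_le_countP_add_countP
    (fun p hp => by cases hh : h p.1 <;> cases hh' : h' p.1 <;> cases p.2 <;> simp_all) S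

lemma empDis_le_empErr_zip_add_empErr_zip {X : Type*} (h h' : X → Bool) (xs : List X)
    (ys : List Bool) (hlen : ys.length = xs.length) :
    empDis h h' xs ≤ empErr h (xs.zip ys) + empErr h' (xs.zip ys) := by
  simpa [List.map_fst_zip hlen.ge] using empDis_map_fst_le_empErr_add_empErr h h' (xs.zip ys)

lemma Real.sqrt_mul_le_add_sqrt_mul {σ ρ K : ℝ} (hσ : 0 ≤ σ) (hρ : ρ ≤ K + √(σ * ρ)) :
    √(σ * ρ) ≤ σ + √(σ * K) := by
  set t := √(σ * ρ)
  rcases le_or_gt t σ with htσ | hσt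
  · linarith [Real.sqrt_nonneg (σ * K)]
  have ht : t ^ 2 = σ * ρ := Real.sq_sqrt (Real.sqrt_pos.mp (hσ.trans_lt hσt)).le
  have hsq : (t - σ) ^ 2 ≤ σ * K := by nlinarith [mul_le_mul_of_nonneg_left hρ hσ]
  linarith [Real.le_sqrt_of_sq_le hsq]

/-- `A, B` are the errors of `h, h*` on `Ŝ`, `m` that of `ĥ`, `e` the excess of `h` over `h*`
on `S`, `Δ` its true excess and `ρ = ρ_S(h, h*)`. -/
lemma excess_le_of_bias_of_concentration {ε σ m A B e Δ ρ : ℝ} (hε : 0 ≤ ε) (hσ : 0 ≤ σ)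
    (hσm : σ + √(σ * m) ≤ ε / 512) (hmB : m ≤ B) (hAm : A - m ≤ 3 * ε / 4)
    (hρ : ρ ≤ A + B) (hbias : e ≤ A - B + ε / 16) (hΔ : 0 ≤ Δ)
    (hconc : |e - Δ| ≤ σ + √(σ * ρ)) :
    Δ ≤ ε := by
  set t := √(σ * ρ)
  obtain ⟨hconc_lower, hconc_upper⟩ := abs_le.mp hconc
  have hσε : σ ≤ ε / 512 := by linarith [Real.sqrt_nonneg (σ * m)]
  have hσm' : σ * m ≤ (ε / 512) ^ 2 :=
    Real.sqrt_le_iff.mp (by linarith : √(σ * m) ≤ ε / 512) |>.2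
  have hρ' : ρ ≤ (2 * m + 25 * ε / 16 + σ) + t := by linarith
  have hK : √(σ * (2 * m + 25 * ε / 16 + σ)) ≤ ε / 16 := by
    rw [Real.sqrt_le_left (by positivity)]
    nlinarith [mul_le_mul_of_nonneg_left hσε hε, mul_le_mul_of_nonneg_left hσε hσ]
  have ht : t ≤ σ + ε / 16 := by linarith [Real.sqrt_mul_le_add_sqrt_mul hσ hρ']
  linarith

lemma measure_map_fst_ne_le_trueErr_add {X : Type*} [MeasurableSpace X]
    (D : Measure (X × Bool)) [IsFiniteMeasure D] {h h' : X → Bool}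
    (hh : Measurable h) (hh' : Measurable h') :
    ((D.map Prod.fst) {x | h x ≠ h' x}).toReal ≤ trueErr D h + trueErr D h' := by
  have hmeas : MeasurableSet {x | h x ≠ h' x} := (measurableSet_eq_fun hh hh').compl
  rw [Measure.map_apply measurable_fst hmeas]
  have hsub : Prod.fst ⁻¹' {x | h x ≠ h' x} ⊆ {p | h p.1 ≠ p.2} ∪ {p | h' p.1 ≠ p.2} := by
    rintro ⟨x, y⟩ hne
    by_contra hxy
    simp_all
  unfold trueErr
  rw [← ENNReal.toReal_add (measure_ne_top D _) (measure_ne_top D _)]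
  exact ENNReal.toReal_mono (by finiteness) ((measure_mono hsub).trans (measure_union_le _ _))

theorem stmt_3_general {X : Type*} [MeasurableSpace X]
    (D : Measure (X × Bool)) [IsProbabilityMeasure D]
    (H : Set (X → Bool)) (hHmeas : ∀ h ∈ H, Measurable h)
    (hstar : X → Bool) (hstarH : hstar ∈ H)
    (hstaropt : ∀ h ∈ H, trueErr D hstar ≤ trueErr D h)
    (xs : List X) (ys yhs : List Bool)
    (hlen' : yhs.length = xs.length)
    (hherm : X → Bool)
    (hhhermopt : ∀ h ∈ H, empErr hherm (xs.zip yhs) ≤ empErr h (xs.zip yhs))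
    (ε σ : ℝ) (hε : ε ∈ Set.Ioc (0:ℝ) 1) (hσ : 0 ≤ σ)
    -- Invariant 1 (approximate favorable bias)
    (inv1 : ∀ h ∈ H, ∀ h' ∈ H, trueErr D h' - trueErr D hstar ≤ ε →
      empErr h (xs.zip ys) - empErr h' (xs.zip ys) ≤
        empErr h (xs.zip yhs) - empErr h' (xs.zip yhs) + ε / 16)
    -- Invariant 2 (concentration)
    (inv2a : ∀ h ∈ H, ∀ h' ∈ H,
      |(empErr h (xs.zip ys) - empErr h' (xs.zip ys)) - (trueErr D h - trueErr D h')|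
        ≤ σ + Real.sqrt (σ * empDis h h' xs))
    (inv2b : σ + Real.sqrt (σ * empErr hherm (xs.zip yhs)) ≤ ε / 512) :
    ∀ h ∈ H, empErr h (xs.zip yhs) - empErr hherm (xs.zip yhs) ≤ 3 * ε / 4 →
      trueErr D h - trueErr D hstar ≤ ε ∧
        ((D.map Prod.fst) {x | h x ≠ hstar x}).toReal ≤ 2 * trueErr D hstar + ε := by
  intro h hH hconf
  have hexcess : trueErr D h - trueErr D hstar ≤ ε :=
    excess_le_of_bias_of_concentration hε.1.le hσ inv2b (hhhermopt hstar hstarH) hconf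
      (empDis_le_empErr_zip_add_empErr_zip h hstar xs yhs hlen')
      (inv1 h hH hstar hstarH (by simpa using hε.1.le))
      (sub_nonneg.mpr (hstaropt h hH)) (inv2a h hH hstar hstarH)
  refine ⟨hexcess, ?_⟩
  linarith [measure_map_fst_ne_le_trueErr_add D (hHmeas h hH) (hHmeas hstar hstarH)]

/-- Under Invariants 1 and 2, any `h ∈ H` in the empirical `3ε/4`-confidence set
on `Ŝ` has true excess error at most `ε`, and hence (writing `U` for the marginal of
`D` on `X` and `ν = err_D(h*)`) disagrees with `h*` with probability at most `2ν + ε`. -/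
theorem stmt_3 {X : Type*} [MeasurableSpace X]
    (D : Measure (X × Bool)) [IsProbabilityMeasure D]
    (H : Set (X → Bool)) (hHmeas : ∀ h ∈ H, Measurable h)
    (hstar : X → Bool) (hstarH : hstar ∈ H)
    (hstaropt : ∀ h ∈ H, trueErr D hstar ≤ trueErr D h)
    (xs : List X) (ys yhs : List Bool)
    (hlen : ys.length = xs.length) (hlen' : yhs.length = xs.length)
    (hherm : X → Bool) (hhhermH : hherm ∈ H)
    (hhhermopt : ∀ h ∈ H, empErr hherm (xs.zip yhs) ≤ empErr h (xs.zip yhs))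
    (ε σ : ℝ) (hε : ε ∈ Set.Ioc (0:ℝ) 1) (hσ : 0 ≤ σ)
    -- Invariant 1 (approximate favorable bias)
    (inv1 : ∀ h ∈ H, ∀ h' ∈ H, trueErr D h' - trueErr D hstar ≤ ε →
      empErr h (xs.zip ys) - empErr h' (xs.zip ys) ≤
        empErr h (xs.zip yhs) - empErr h' (xs.zip yhs) + ε / 16)
    -- Invariant 2 (concentration)
    (inv2a : ∀ h ∈ H, ∀ h' ∈ H,
      |(empErr h (xs.zip ys) - empErr h' (xs.zip ys)) - (trueErr D h - trueErr D h')|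
        ≤ σ + Real.sqrt (σ * empDis h h' xs))
    (inv2b : σ + Real.sqrt (σ * empErr hherm (xs.zip yhs)) ≤ ε / 512) :
    ∀ h ∈ H, empErr h (xs.zip yhs) - empErr hherm (xs.zip yhs) ≤ 3 * ε / 4 →
      trueErr D h - trueErr D hstar ≤ ε ∧
        ((D.map Prod.fst) {x | h x ≠ hstar x}).toReal ≤ 2 * trueErr D hstar + ε :=
  stmt_3_general D H hHmeas hstar hstarH hstaropt xs ys yhs hlen' hherm hhhermopt ε σ hε hσ inv1
    inv2a inv2b
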